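/- arXiv:1110.4960 — 2 statements merged into one kernel-verified Lean document; each statement's English description precedes it below -/
import Mathlib

section
/- Let n ≥ 1 and let x, x', y, y' ∈ ℝ^{2n} (realized as Fin n ⊕ Fin n → ℝ) satisfy ‖x‖ = ‖x'‖, ‖y‖ = ‖y'‖, x · y = x' · y', and ω(x, y) = ω(x', y'), where ω(v, w) = Σₖ (v(inl k)·w(inr k) − v(inr k)·w(inl k)) is the standard symplectic form. Then there exists a real 2n×2n matrix R that is both orthogonal (RᵀR = 1) and symplectic (RᵀJR = J with J = fromBlocks 0 (−1) 1 0) such that R.mulVec x = x' and R.mulVec y = y'. -/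
/-!
Identify `ℝ^{2n}` with `ℂⁿ` through `v ↦ (v (inl k) + i v (inr k))ₖ`. The Hermitian inner product
of two images is `⟪u, v⟫ + i ω(u, v)`, so the hypotheses say that `(x, y)` and `(x', y')` have the
same complex Gram matrix. Hence the isometry between the complex spans they generate extends to a
unitary map of `ℂⁿ` carrying one pair to the other. Read in real coordinates, a unitary map is
orthogonal and commutes with `J` (multiplication by `i`), and an orthogonal matrix commuting with
`J` is symplectic.
-/

open Matrix WithLp

section Extension

variable {𝕜 V W : Type*} [RCLike 𝕜] [NormedAddCommGroup V] [InnerProductSpace 𝕜 V]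
  [FiniteDimensional 𝕜 V] [AddCommGroup W] [Module 𝕜 W]

theorem LinearMap.exists_linearIsometryEquiv_comp_eq (φ φ' : W →ₗ[𝕜] V)
    (h : ∀ a, ‖φ' a‖ = ‖φ a‖) : ∃ U : V ≃ₗᵢ[𝕜] V, ∀ a, U (φ a) = φ' a := by
  have hker : ker φ ≤ ker φ' := fun a ha => by
    rwa [mem_ker, ← norm_eq_zero, h, norm_eq_zero]
  let F : range φ →ₗ[𝕜] V := (ker φ).liftQ φ' hker ∘ₗ φ.quotKerEquivRange.symm.toLinearMap
  have hF : ∀ a, F ⟨φ a, mem_range_self φ a⟩ = φ' a := fun a => by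
    simp only [F, coe_comp, LinearEquiv.coe_coe, Function.comp_apply,
      quotKerEquivRange_symm_apply_image]
    rfl
  let L : range φ →ₗᵢ[𝕜] V :=
    ⟨F, by rintro ⟨_, a, rfl⟩; exact (congrArg norm (hF a)).trans (h a)⟩
  exact ⟨L.extend.toLinearIsometryEquiv rfl,
    fun a => (L.extend_apply ⟨φ a, mem_range_self φ a⟩).trans (hF a)⟩

theorem exists_linearIsometryEquiv_map_pair {z w z' w' : V} (hz : ‖z‖ = ‖z'‖)
    (hw : ‖w‖ = ‖w'‖) (hzw : inner 𝕜 z w = inner 𝕜 z' w') :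
    ∃ U : V ≃ₗᵢ[𝕜] V, U z = z' ∧ U w = w' := by
  let φ (u v : V) : 𝕜 × 𝕜 →ₗ[𝕜] V :=
    (LinearMap.toSpanSingleton 𝕜 V u).coprod (LinearMap.toSpanSingleton 𝕜 V v)
  have hφ (u v : V) (a b : 𝕜) : φ u v (a, b) = a • u + b • v := rfl
  obtain ⟨U, hU⟩ := (φ z w).exists_linearIsometryEquiv_comp_eq (φ z' w') fun ⟨a, b⟩ => by
    rw [hφ, hφ, ← sq_eq_sq₀ (norm_nonneg _) (norm_nonneg _), @norm_add_sq 𝕜, @norm_add_sq 𝕜]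
    simp only [norm_smul, inner_smul_left, inner_smul_right, hz, hw, hzw]
  exact ⟨U, by simpa [hφ] using hU (1, 0), by simpa [hφ] using hU (0, 1)⟩

end Extension

theorem Matrix.toEuclideanLin_symm_mem_unitaryGroup {𝕜 m : Type*} [RCLike 𝕜] [Fintype m]
    [DecidableEq m] (T : EuclideanSpace 𝕜 m ≃ₗᵢ[𝕜] EuclideanSpace 𝕜 m) :
    toEuclideanLin.symm T.toLinearEquiv.toLinearMap ∈ unitaryGroup m 𝕜 :=
  T.toMatrix_mem_unitaryGroup (EuclideanSpace.basisFun m 𝕜) (EuclideanSpace.basisFun m 𝕜)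

theorem Matrix.mem_symplecticGroup_of_mem_orthogonalGroup {l R : Type*} [Fintype l]
    [DecidableEq l] [CommRing R] {A : Matrix (l ⊕ l) (l ⊕ l) R}
    (hA : A ∈ orthogonalGroup (l ⊕ l) R) (hJ : Commute (J l R) A) :
    A ∈ symplecticGroup l R := by
  rw [SymplecticGroup.mem_iff', Matrix.mul_assoc, hJ.eq, ← Matrix.mul_assoc,
    (mem_orthogonalGroup_iff' _ _).1 hA, Matrix.one_mul]

namespace EuclideanSpace

open Complex

variable {ι : Type*} [Fintype ι]

def symplecticForm (u v : EuclideanSpace ℝ (ι ⊕ ι)) : ℝ :=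
  ∑ k, (u (Sum.inl k) * v (Sum.inr k) - u (Sum.inr k) * v (Sum.inl k))

noncomputable def complexify : EuclideanSpace ℝ (ι ⊕ ι) ≃ₗᵢ[ℝ] EuclideanSpace ℂ ι where
  toFun v := toLp 2 fun k => ⟨v (Sum.inl k), v (Sum.inr k)⟩
  invFun z := toLp 2 (Sum.elim (fun k => (z k).re) fun k => (z k).im)
  map_add' u v := by ext : 1; apply Complex.ext <;> simp
  map_smul' c v := by ext : 1; apply Complex.ext <;> simp
  left_inv v := by ext (k | k) <;> simp
  right_inv z := by ext; simp
  norm_map' v := by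
    rw [EuclideanSpace.norm_eq, EuclideanSpace.norm_eq, Fintype.sum_sum_type,
      ← Finset.sum_add_distrib]
    congr 1
    refine Finset.sum_congr rfl fun k _ => ?_
    rw [Complex.sq_norm, Complex.normSq_mk]
    simp [sq]

@[simp] theorem complexify_apply_re (v : EuclideanSpace ℝ (ι ⊕ ι)) (k : ι) :
    (complexify v k).re = v (Sum.inl k) := rfl

@[simp] theorem complexify_apply_im (v : EuclideanSpace ℝ (ι ⊕ ι)) (k : ι) :
    (complexify v k).im = v (Sum.inr k) := rfl

theorem inner_complexify (u v : EuclideanSpace ℝ (ι ⊕ ι)) :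
    inner ℂ (complexify u) (complexify v) = ⟨inner ℝ u v, symplecticForm u v⟩ := by
  apply Complex.ext
  · simp [PiLp.inner_apply, Fintype.sum_sum_type, Finset.sum_add_distrib, mul_comm]
  · simp [PiLp.inner_apply, symplecticForm, mul_comm, Finset.sum_sub_distrib, neg_add_eq_sub]

noncomputable def realify (U : EuclideanSpace ℂ ι ≃ₗᵢ[ℂ] EuclideanSpace ℂ ι) :
    EuclideanSpace ℝ (ι ⊕ ι) ≃ₗᵢ[ℝ] EuclideanSpace ℝ (ι ⊕ ι) :=
  complexify.trans <|
    ({ U.toLinearEquiv.restrictScalars ℝ with norm_map' := U.norm_map } :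
      EuclideanSpace ℂ ι ≃ₗᵢ[ℝ] EuclideanSpace ℂ ι).trans complexify.symm

theorem complexify_realify (U : EuclideanSpace ℂ ι ≃ₗᵢ[ℂ] EuclideanSpace ℂ ι)
    (v : EuclideanSpace ℝ (ι ⊕ ι)) : complexify (realify U v) = U (complexify v) :=
  complexify.apply_symm_apply _

variable [DecidableEq ι]

theorem complexify_J_mulVec (v : EuclideanSpace ℝ (ι ⊕ ι)) :
    complexify (toLp 2 (J ι ℝ *ᵥ ofLp v)) = I • complexify v := by
  ext k; apply Complex.ext <;> simp [J, fromBlocks_mulVec, neg_mulVec]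

theorem realify_toLp_J_mulVec (U : EuclideanSpace ℂ ι ≃ₗᵢ[ℂ] EuclideanSpace ℂ ι)
    (v : EuclideanSpace ℝ (ι ⊕ ι)) :
    realify U (toLp 2 (J ι ℝ *ᵥ ofLp v)) = toLp 2 (J ι ℝ *ᵥ ofLp (realify U v)) := by
  apply complexify.injective
  rw [complexify_realify, complexify_J_mulVec, complexify_J_mulVec, complexify_realify, map_smul]

noncomputable def realifyMatrix (U : EuclideanSpace ℂ ι ≃ₗᵢ[ℂ] EuclideanSpace ℂ ι) :
    Matrix (ι ⊕ ι) (ι ⊕ ι) ℝ :=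
  toEuclideanLin.symm (realify U).toLinearEquiv.toLinearMap

theorem realifyMatrix_mulVec (U : EuclideanSpace ℂ ι ≃ₗᵢ[ℂ] EuclideanSpace ℂ ι)
    (v : EuclideanSpace ℝ (ι ⊕ ι)) : realifyMatrix U *ᵥ ofLp v = ofLp (realify U v) := by
  change ofLp (toEuclideanLin (realifyMatrix U) v) = _
  rw [realifyMatrix, LinearEquiv.apply_symm_apply]
  rfl

theorem realifyMatrix_mem_orthogonalGroup (U : EuclideanSpace ℂ ι ≃ₗᵢ[ℂ] EuclideanSpace ℂ ι) :
    realifyMatrix U ∈ orthogonalGroup (ι ⊕ ι) ℝ :=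
  toEuclideanLin_symm_mem_unitaryGroup (realify U)

theorem commute_J_realifyMatrix (U : EuclideanSpace ℂ ι ≃ₗᵢ[ℂ] EuclideanSpace ℂ ι) :
    Commute (J ι ℝ) (realifyMatrix U) := by
  refine ext_iff_mulVec.2 fun w => ?_
  rw [← mulVec_mulVec, ← mulVec_mulVec, ← ofLp_toLp 2 w, realifyMatrix_mulVec,
    ← ofLp_toLp 2 (J ι ℝ *ᵥ _), realifyMatrix_mulVec, realify_toLp_J_mulVec, ofLp_toLp]

end EuclideanSpace

open EuclideanSpace

theorem exists_orthogonal_symplectic_map_pair_general (n : ℕ)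
    (x x' y y' : EuclideanSpace ℝ (Fin n ⊕ Fin n))
    (hx : ‖x‖ = ‖x'‖) (hy : ‖y‖ = ‖y'‖)
    (hdot : (inner ℝ x y : ℝ) = inner ℝ x' y')
    (hω : ∑ k, (x (Sum.inl k) * y (Sum.inr k) - x (Sum.inr k) * y (Sum.inl k)) =
      ∑ k, (x' (Sum.inl k) * y' (Sum.inr k) - x' (Sum.inr k) * y' (Sum.inl k))) :
    ∃ R : Matrix (Fin n ⊕ Fin n) (Fin n ⊕ Fin n) ℝ,
      Rᵀ * R = 1 ∧
      Rᵀ * (Matrix.fromBlocks (0 : Matrix (Fin n) (Fin n) ℝ) (-1) 1 0) * R =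
        Matrix.fromBlocks (0 : Matrix (Fin n) (Fin n) ℝ) (-1) 1 0 ∧
      R.mulVec x = x' ∧ R.mulVec y = y' := by
  have hω' : symplecticForm x y = symplecticForm x' y' := hω
  obtain ⟨U, hUx, hUy⟩ := exists_linearIsometryEquiv_map_pair
    (by simpa using hx : ‖complexify x‖ = ‖complexify x'‖)
    (by simpa using hy : ‖complexify y‖ = ‖complexify y'‖)
    (by rw [inner_complexify, inner_complexify, hdot, hω'])
  have hR := realifyMatrix_mem_orthogonalGroup U
  have hmap {v v'} (h : U (complexify v) = complexify v') :
      realifyMatrix U *ᵥ ofLp v = ofLp v' := by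
    rw [realifyMatrix_mulVec, complexify.injective ((complexify_realify U v).trans h)]
  exact ⟨realifyMatrix U, (mem_orthogonalGroup_iff' _ _).1 hR,
    SymplecticGroup.mem_iff'.1 (mem_symplecticGroup_of_mem_orthogonalGroup hR
      (commute_J_realifyMatrix U)), hmap hUx, hmap hUy⟩

/-- If `x, x', y, y' ∈ ℝ^{2n}` have equal norms (`‖x‖ = ‖x'‖`,
`‖y‖ = ‖y'‖`), equal Euclidean inner products (`x⬝y = x'⬝y'`) and equal symplectic
products (`ω(x,y) = ω(x',y')`), then some orthogonal symplectic matrix `R ∈ K(n)`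
maps `x` to `x'` and `y` to `y'`. -/
theorem exists_orthogonal_symplectic_map_pair (n : ℕ) (hn : 1 ≤ n)
    (x x' y y' : EuclideanSpace ℝ (Fin n ⊕ Fin n))
    (hx : ‖x‖ = ‖x'‖) (hy : ‖y‖ = ‖y'‖)
    (hdot : (inner ℝ x y : ℝ) = inner ℝ x' y')
    (hω : ∑ k, (x (Sum.inl k) * y (Sum.inr k) - x (Sum.inr k) * y (Sum.inl k)) =
      ∑ k, (x' (Sum.inl k) * y' (Sum.inr k) - x' (Sum.inr k) * y' (Sum.inl k))) :
    ∃ R : Matrix (Fin n ⊕ Fin n) (Fin n ⊕ Fin n) ℝ,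
      Rᵀ * R = 1 ∧
      Rᵀ * (Matrix.fromBlocks (0 : Matrix (Fin n) (Fin n) ℝ) (-1) 1 0) * R =
        Matrix.fromBlocks (0 : Matrix (Fin n) (Fin n) ℝ) (-1) 1 0 ∧
      R.mulVec x = x' ∧ R.mulVec y = y' :=
  exists_orthogonal_symplectic_map_pair_general n x x' y y' hx hy hdot hω
end

section
/- Let μ be the Haar probability measure on the compact group U(n) of n×n complex unitary matrices and let f : ℂⁿ × ℂⁿ → ℝ be a bounded measurable function. Define f̃(a, b) = ∫ f(U.mulVec a, U.mulVec b) dμ(U). Then for all a, a', b, b' ∈ ℂⁿ with ‖a‖ = ‖a'‖, ‖b‖ = ‖b'‖ and ⟨a, b⟩ = ⟨a', b'⟩, one has f̃(a, b) = f̃(a', b'). -/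
/-!
There is `V ∈ U(n)` with `V a' = a` and `V b' = b`: the map `x a' + y b' ↦ x a + y b` is
well defined and isometric because the Gram data agree, and an isometry between subspaces of
`ℂⁿ` extends to a unitary of `ℂⁿ`. On the compact group `U(n)` the Haar probability measure is
also right invariant (the right translate of `μ` is again a Haar probability measure, hence `μ`),
so the substitution `U ↦ U V` turns the average at `(a', b')` into the average at `(a, b)`.
-/

open MeasureTheory Matrix

/-- The unitary group carries its Borel σ-algebra. -/
noncomputable instance unitaryGroupMeasurableSpace (n : ℕ) :
    MeasurableSpace (Matrix.unitaryGroup (Fin n) ℂ) := borel _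

instance unitaryGroupBorelSpace (n : ℕ) :
    BorelSpace (Matrix.unitaryGroup (Fin n) ℂ) := ⟨rfl⟩

/-- `ℂⁿ` carries its Borel σ-algebra. -/
noncomputable instance euclideanSpaceMeasurableSpace (n : ℕ) :
    MeasurableSpace (EuclideanSpace ℂ (Fin n)) := borel _

instance euclideanSpaceBorelSpace (n : ℕ) :
    BorelSpace (EuclideanSpace ℂ (Fin n)) := ⟨rfl⟩

theorem MeasureTheory.Measure.IsHaarMeasure.isMulRightInvariant_of_isProbabilityMeasure
    {G : Type*} [Group G] [TopologicalSpace G] [IsTopologicalGroup G] [LocallyCompactSpace G]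
    [MeasurableSpace G] [BorelSpace G] (μ : Measure G) [μ.IsHaarMeasure]
    [IsProbabilityMeasure μ] : μ.IsMulRightInvariant where
  map_mul_right_eq_self g := by
    have : IsProbabilityMeasure (μ.map (· * g)) :=
      isProbabilityMeasure_map (measurable_mul_const g).aemeasurable
    exact isHaarMeasure_eq_of_isProbabilityMeasure _ μ

instance Matrix.UnitaryGroup.compactSpace {n 𝕜 : Type*} [Fintype n] [DecidableEq n] [RCLike 𝕜] :
    CompactSpace (unitaryGroup n 𝕜) :=
  have hbox : IsCompact (Set.univ.pi fun _ => Set.univ.pi fun _ => Metric.closedBall 0 1 :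
      Set (Matrix n n 𝕜)) :=
    isCompact_univ_pi fun _ => isCompact_univ_pi fun _ => isCompact_closedBall (0 : 𝕜) 1
  isCompact_iff_compactSpace.mp <| hbox.of_isClosed_subset (isClosed_unitary (R := Matrix n n 𝕜))
    fun A hA i _ j _ => by simpa using entry_norm_bound_of_unitary hA i j

section InnerProductSpace

variable {𝕜 M E : Type*} [RCLike 𝕜] [AddCommGroup M] [Module 𝕜 M]
  [NormedAddCommGroup E] [InnerProductSpace 𝕜 E] [FiniteDimensional 𝕜 E]

theorem LinearMap.exists_linearIsometryEquiv_comp_eq_of_norm_eq (L L' : M →ₗ[𝕜] E)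
    (h : ∀ p, ‖L p‖ = ‖L' p‖) : ∃ φ : E ≃ₗᵢ[𝕜] E, ∀ p, φ (L' p) = L p := by
  have hker : ker L' ≤ ker L := fun p hp => by
    rw [mem_ker, ← norm_eq_zero, h, mem_ker.mp hp, norm_zero]
  let φ₀ : range L' →ₗ[𝕜] E := (ker L').liftQ L hker ∘ₗ L'.quotKerEquivRange.symm
  have hφ₀ (p : M) : φ₀ ⟨L' p, mem_range_self L' p⟩ = L p := by
    simp only [φ₀, comp_apply, LinearEquiv.coe_coe, quotKerEquivRange_symm_apply_image]
    rfl
  let ψ : range L' →ₗᵢ[𝕜] E := ⟨φ₀, by rintro ⟨_, p, rfl⟩; rw [hφ₀, h]; rfl⟩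
  refine ⟨ψ.extend.toLinearIsometryEquiv rfl, fun p => ?_⟩
  rw [LinearIsometry.toLinearIsometryEquiv_apply]
  exact (ψ.extend_apply ⟨L' p, mem_range_self L' p⟩).trans (hφ₀ p)

theorem exists_linearIsometryEquiv_apply_eq_of_inner_eq {ι : Type*} [Fintype ι] (v w : ι → E)
    (h : ∀ i j, inner 𝕜 (v i) (v j) = inner 𝕜 (w i) (w j)) :
    ∃ φ : E ≃ₗᵢ[𝕜] E, ∀ i, φ (w i) = v i := by
  classical
  have hinner (c : ι → 𝕜) :
      inner 𝕜 (Fintype.linearCombination 𝕜 v c) (Fintype.linearCombination 𝕜 v c) =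
        inner 𝕜 (Fintype.linearCombination 𝕜 w c) (Fintype.linearCombination 𝕜 w c) := by
    simp only [Fintype.linearCombination_apply, sum_inner, inner_sum, inner_smul_left,
      inner_smul_right, h]
  obtain ⟨φ, hφ⟩ := LinearMap.exists_linearIsometryEquiv_comp_eq_of_norm_eq
    (Fintype.linearCombination 𝕜 v) (Fintype.linearCombination 𝕜 w) fun c => by
      rw [@norm_eq_sqrt_re_inner 𝕜, @norm_eq_sqrt_re_inner 𝕜, hinner]
  exact ⟨φ, fun i => by simpa using hφ (Pi.single i 1)⟩

end InnerProductSpace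

section UnitaryGroup

variable {𝕜 n : Type*} [RCLike 𝕜] [Fintype n] [DecidableEq n]

theorem LinearIsometryEquiv.exists_unitaryGroup_mulVec_eq
    (φ : EuclideanSpace 𝕜 n ≃ₗᵢ[𝕜] EuclideanSpace 𝕜 n) :
    ∃ U : unitaryGroup n 𝕜, ∀ v : EuclideanSpace 𝕜 n, (U : Matrix n n 𝕜) *ᵥ v = φ v := by
  let b := (EuclideanSpace.basisFun n 𝕜).toBasis
  have hφ : toEuclideanLin (φ.toMatrix b b) = φ.toLinearMap := by
    rw [toEuclideanLin_eq_toLin_orthonormal, Matrix.toLin_toMatrix]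
  exact ⟨⟨_, φ.toMatrix_mem_unitaryGroup (EuclideanSpace.basisFun n 𝕜)
    (EuclideanSpace.basisFun n 𝕜)⟩, fun v => congrArg WithLp.ofLp (LinearMap.congr_fun hφ v)⟩

theorem Matrix.exists_unitaryGroup_mulVec_eq_of_inner_eq (a a' b b' : EuclideanSpace 𝕜 n)
    (ha : ‖a‖ = ‖a'‖) (hb : ‖b‖ = ‖b'‖) (hab : inner 𝕜 a b = inner 𝕜 a' b') :
    ∃ V : unitaryGroup n 𝕜, (V : Matrix n n 𝕜) *ᵥ a' = a ∧ (V : Matrix n n 𝕜) *ᵥ b' = b := by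
  have hba : inner 𝕜 b a = inner 𝕜 b' a' := by rw [← inner_conj_symm, hab, inner_conj_symm]
  have hgram : ∀ i j, inner 𝕜 ((![a, b] : Fin 2 → EuclideanSpace 𝕜 n) i) (![a, b] j) =
      inner 𝕜 ((![a', b'] : Fin 2 → EuclideanSpace 𝕜 n) i) (![a', b'] j) := by
    simp [Fin.forall_fin_two, inner_self_eq_norm_sq_to_K, ha, hb, hab, hba]
  obtain ⟨φ, hφ⟩ := exists_linearIsometryEquiv_apply_eq_of_inner_eq _ _ hgram
  obtain ⟨V, hV⟩ := φ.exists_unitaryGroup_mulVec_eq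
  exact ⟨V, by rw [hV, show φ a' = a from hφ 0], by rw [hV, show φ b' = b from hφ 1]⟩

end UnitaryGroup

theorem symmetrized_depends_on_invariants_general (n : ℕ)
    (μ : Measure (Matrix.unitaryGroup (Fin n) ℂ))
    [μ.IsHaarMeasure] [IsProbabilityMeasure μ]
    (f : EuclideanSpace ℂ (Fin n) × EuclideanSpace ℂ (Fin n) → ℝ)
    (a a' b b' : EuclideanSpace ℂ (Fin n))
    (ha : ‖a‖ = ‖a'‖) (hb : ‖b‖ = ‖b'‖)
    (hab : (inner ℂ a b : ℂ) = inner ℂ a' b') :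
    ∫ U : Matrix.unitaryGroup (Fin n) ℂ,
        f (WithLp.toLp 2 ((U : Matrix (Fin n) (Fin n) ℂ).mulVec a),
           WithLp.toLp 2 ((U : Matrix (Fin n) (Fin n) ℂ).mulVec b)) ∂μ =
      ∫ U : Matrix.unitaryGroup (Fin n) ℂ,
        f (WithLp.toLp 2 ((U : Matrix (Fin n) (Fin n) ℂ).mulVec a'),
           WithLp.toLp 2 ((U : Matrix (Fin n) (Fin n) ℂ).mulVec b')) ∂μ := by
  obtain ⟨V, hVa, hVb⟩ := exists_unitaryGroup_mulVec_eq_of_inner_eq a a' b b' ha hb hab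
  have := Measure.IsHaarMeasure.isMulRightInvariant_of_isProbabilityMeasure μ
  conv_rhs => rw [← integral_mul_right_eq_self _ V]
  simp only [UnitaryGroup.mul_val, ← mulVec_mulVec, hVa, hVb]

/-- The Haar average `f̃(a,b) = ∫ f(Ua, Ub) dμ(U)` of a bounded
measurable function `f : ℂⁿ × ℂⁿ → ℝ` depends only on `‖a‖²`, `‖b‖²` and `⟪a, b⟫`. -/
theorem symmetrized_depends_on_invariants (n : ℕ)
    (μ : Measure (Matrix.unitaryGroup (Fin n) ℂ))
    [μ.IsHaarMeasure] [IsProbabilityMeasure μ]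
    (f : EuclideanSpace ℂ (Fin n) × EuclideanSpace ℂ (Fin n) → ℝ)
    (hf : Measurable f)
    (hbd : ∃ C, ∀ p, |f p| ≤ C)
    (a a' b b' : EuclideanSpace ℂ (Fin n))
    (ha : ‖a‖ = ‖a'‖) (hb : ‖b‖ = ‖b'‖)
    (hab : (inner ℂ a b : ℂ) = inner ℂ a' b') :
    ∫ U : Matrix.unitaryGroup (Fin n) ℂ,
        f (WithLp.toLp 2 ((U : Matrix (Fin n) (Fin n) ℂ).mulVec a),
           WithLp.toLp 2 ((U : Matrix (Fin n) (Fin n) ℂ).mulVec b)) ∂μ =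
      ∫ U : Matrix.unitaryGroup (Fin n) ℂ,
        f (WithLp.toLp 2 ((U : Matrix (Fin n) (Fin n) ℂ).mulVec a'),
           WithLp.toLp 2 ((U : Matrix (Fin n) (Fin n) ℂ).mulVec b')) ∂μ :=
  symmetrized_depends_on_invariants_general n μ f a a' b b' ha hb hab
end
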